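/- arXiv:2209.14954 — 2 statements merged into one kernel-verified Lean document; each statement's English description precedes it below -/
import Mathlib

section
/- Let F ∈ ℝ^{k×p} have full row rank, G ∈ ℝ^{q×l} have full column rank, A ∈ ℝ^{p×q}, H ∈ ℝ^{k×l}. Define X̂ = A + Fᵀ(FFᵀ)⁻¹(H − FAG)(GᵀG)⁻¹Gᵀ. Then F X̂ G = H, and for every X ∈ ℝ^{p×q} with FXG = H one has ‖A − X̂‖_F ≤ ‖A − X‖_F. -/
open Matrix BigOperators

noncomputable def frob {m n : Type*} [Fintype m] [Fintype n] (A : Matrix m n ℝ) : ℝ :=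
  Real.sqrt (∑ i, ∑ j, (A i j) ^ 2)

/-!
With `M = (F Fᵀ)⁻¹ (H - F A G) (Gᵀ G)⁻¹` we have `X̂ = A + Fᵀ M Gᵀ`, and `F X̂ G = H` because
`F Fᵀ` and `Gᵀ G` are invertible. For any feasible `X`, `D = X̂ - X` satisfies `F D G = 0`, so
`⟪Fᵀ M Gᵀ, D⟫ = tr (Mᵀ F D G) = 0` in the Frobenius inner product `⟪B, D⟫ = tr (Bᵀ D)`.
Pythagoras then gives `‖A - X‖² = ‖A - X̂‖² + ‖D‖²`.
-/

theorem Matrix.isUnit_det_of_rank_eq_card {n K : Type*} [Fintype n] [DecidableEq n] [Field K]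
    {A : Matrix n n K} (h : A.rank = Fintype.card n) : IsUnit A.det := by
  have hrange : LinearMap.range A.mulVecLin = ⊤ :=
    Submodule.eq_top_of_finrank_eq (by rw [← Matrix.rank, h, Module.finrank_fintype_fun_eq_card])
  exact (isUnit_iff_isUnit_det A).mp
    (mulVec_surjective_iff_isUnit.mp (LinearMap.range_eq_top.mp hrange))

theorem Matrix.trace_transpose_mul_eq_sum {m n R : Type*} [Fintype m] [Fintype n]
    [NonUnitalNonAssocSemiring R] (B C : Matrix m n R) :
    trace (Bᵀ * C) = ∑ i, ∑ j, B i j * C i j := by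
  simp only [trace, diag_apply, mul_apply, transpose_apply]
  exact Finset.sum_comm

theorem frob_eq_sqrt_trace {m n : Type*} [Fintype m] [Fintype n] (B : Matrix m n ℝ) :
    frob B = Real.sqrt (trace (Bᵀ * B)) := by
  simp only [frob, trace_transpose_mul_eq_sum, sq]

theorem Matrix.trace_transpose_mul_self_nonneg {m n : Type*} [Fintype m] [Fintype n]
    (B : Matrix m n ℝ) :
    0 ≤ trace (Bᵀ * B) := by
  rw [trace_transpose_mul_eq_sum]
  exact Finset.sum_nonneg fun i _ => Finset.sum_nonneg fun j _ => mul_self_nonneg _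

theorem frob_le_frob_add_of_trace_transpose_mul_eq_zero {m n : Type*} [Fintype m] [Fintype n]
    {B D : Matrix m n ℝ} (h : trace (Bᵀ * D) = 0) : frob B ≤ frob (B + D) := by
  have hexpand : trace ((B + D)ᵀ * (B + D)) =
      trace (Bᵀ * B) + 2 * trace (Bᵀ * D) + trace (Dᵀ * D) := by
    have hsymm : trace (Dᵀ * B) = trace (Bᵀ * D) := by
      rw [← trace_transpose, transpose_mul, transpose_transpose]
    rw [transpose_add, Matrix.add_mul, Matrix.mul_add, Matrix.mul_add, trace_add, trace_add,
      trace_add, hsymm]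
    ring
  rw [frob_eq_sqrt_trace, frob_eq_sqrt_trace, hexpand, h]
  exact Real.sqrt_le_sqrt (by linarith [trace_transpose_mul_self_nonneg D])

theorem Matrix.trace_transpose_mul_sandwich {m n k l R : Type*} [Fintype m] [Fintype n]
    [Fintype k] [Fintype l] [CommSemiring R]
    (F : Matrix k m R) (M : Matrix k l R) (G : Matrix n l R) (D : Matrix m n R) :
    trace ((Fᵀ * M * Gᵀ)ᵀ * D) = trace (Mᵀ * (F * D * G)) := by
  rw [transpose_mul, transpose_mul, transpose_transpose, transpose_transpose, Matrix.mul_assoc,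
    trace_mul_comm]
  simp only [Matrix.mul_assoc]

theorem Matrix.mul_transpose_mul_gram_inv_mul {m n k l K : Type*} [Fintype m] [Fintype n]
    [Fintype k] [Fintype l] [DecidableEq k] [DecidableEq l] [Field K]
    {F : Matrix k m K} {G : Matrix n l K} (hF : IsUnit (F * Fᵀ).det) (hG : IsUnit (Gᵀ * G).det)
    (E : Matrix k l K) :
    F * (Fᵀ * ((F * Fᵀ)⁻¹ * E * (Gᵀ * G)⁻¹) * Gᵀ) * G = E := by
  calc F * (Fᵀ * ((F * Fᵀ)⁻¹ * E * (Gᵀ * G)⁻¹) * Gᵀ) * G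
      = (F * Fᵀ * (F * Fᵀ)⁻¹) * E * ((Gᵀ * G)⁻¹ * (Gᵀ * G)) := by
        simp only [Matrix.mul_assoc]
    _ = E := by rw [mul_nonsing_inv _ hF, nonsing_inv_mul _ hG, Matrix.one_mul, Matrix.mul_one]

theorem two_sided_product_constrained_projection {k p q l : ℕ}
    (F : Matrix (Fin k) (Fin p) ℝ) (G : Matrix (Fin q) (Fin l) ℝ)
    (A : Matrix (Fin p) (Fin q) ℝ) (H : Matrix (Fin k) (Fin l) ℝ)
    (hF : F.rank = k) (hG : G.rank = l) :
    let Xhat := A + Fᵀ * (F * Fᵀ)⁻¹ * (H - F * A * G) * (Gᵀ * G)⁻¹ * Gᵀ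
    F * Xhat * G = H ∧
      ∀ X : Matrix (Fin p) (Fin q) ℝ, F * X * G = H → frob (A - Xhat) ≤ frob (A - X) := by
  intro Xhat
  have hFF : IsUnit (F * Fᵀ).det :=
    isUnit_det_of_rank_eq_card (by rw [rank_self_mul_transpose, hF, Fintype.card_fin])
  have hGG : IsUnit (Gᵀ * G).det :=
    isUnit_det_of_rank_eq_card (by rw [rank_transpose_mul_self, hG, Fintype.card_fin])
  set M := (F * Fᵀ)⁻¹ * (H - F * A * G) * (Gᵀ * G)⁻¹
  have hXhat : Xhat = A + Fᵀ * M * Gᵀ := by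
    simp only [Xhat, M, Matrix.mul_assoc]
  have hfeasible : F * Xhat * G = H := by
    rw [hXhat, Matrix.mul_add, Matrix.add_mul, mul_transpose_mul_gram_inv_mul hFF hGG]
    abel
  refine ⟨hfeasible, fun X hX => ?_⟩
  have hkernel : F * (Xhat - X) * G = 0 := by
    rw [Matrix.mul_sub, Matrix.sub_mul, hfeasible, hX, sub_self]
  have horthogonal : trace ((A - Xhat)ᵀ * (Xhat - X)) = 0 := by
    rw [hXhat, sub_add_cancel_left, transpose_neg, Matrix.neg_mul, trace_neg,
      trace_transpose_mul_sandwich, ← hXhat, hkernel, Matrix.mul_zero, trace_zero, neg_zero]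
  simpa using frob_le_frob_add_of_trace_transpose_mul_eq_zero horthogonal
end

section
/- Suppose (X₁, λ₁) and (X₂, λ₂) both satisfy S_B(S_B Xᵢ S_C − A)S_C + λᵢ Xᵢ = 0 and ‖X₁‖_F = ‖X₂‖_F. Then ‖A − S_B X₂ S_C‖_F² − ‖A − S_B X₁ S_C‖_F² = ((λ₁ − λ₂)/2) ‖X₁ − X₂‖_F². In particular, λ₁ > λ₂ implies ‖A − S_B X₁ S_C‖_F < ‖A − S_B X₂ S_C‖_F or X₁ = X₂. -/
/-!
With `R(X) = A - B X C` and the Frobenius inner product `⟪P, Q⟫ = tr (Pᵀ Q)`, the map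
`X ↦ B X C` is self-adjoint when `B` and `C` are symmetric, and stationarity says
`B R(Xᵢ) C = λᵢ Xᵢ`. Hence
`‖R(X₂)‖² - ‖R(X₁)‖² = ⟪R(X₂) - R(X₁), R(X₂) + R(X₁)⟫ = ⟪X₁ - X₂, λ₁ X₁ + λ₂ X₂⟫`,
and when `‖X₁‖ = ‖X₂‖` the right-hand side polarizes to `(λ₁ - λ₂)/2 ‖X₁ - X₂‖²`.
-/

open Matrix BigOperators

namespace Matrix

section Trace

variable {R m n p q : Type*} [CommRing R] [Fintype m] [Fintype n] [Fintype p] [Fintype q]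

lemma trace_transpose_mul_comm (P Q : Matrix m n R) : trace (Qᵀ * P) = trace (Pᵀ * Q) := by
  rw [← trace_transpose, transpose_mul, transpose_transpose]

lemma trace_transpose_mul_mul_mul (B : Matrix p m R) (X : Matrix m n R) (C : Matrix n q R)
    (Y : Matrix p q R) : trace ((B * X * C)ᵀ * Y) = trace (Xᵀ * (Bᵀ * Y * Cᵀ)) := by
  rw [transpose_mul, transpose_mul, Matrix.mul_assoc, Matrix.mul_assoc, trace_mul_comm]
  simp only [Matrix.mul_assoc]

end Trace

end Matrix

section Frobenius

variable {m n : Type*} [Fintype m] [Fintype n]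

lemma frob_nonneg (X : Matrix m n ℝ) : 0 ≤ frob X := Real.sqrt_nonneg _

lemma frob_sq_eq_trace (X : Matrix m n ℝ) : frob X ^ 2 = trace (Xᵀ * X) := by
  rw [frob, Real.sq_sqrt (by positivity), trace, Finset.sum_comm]
  simp only [diag_apply, mul_apply, transpose_apply, sq]

lemma frob_pos_iff {X : Matrix m n ℝ} : 0 < frob X ↔ X ≠ 0 := by
  rw [(frob_nonneg X).lt_iff_ne', Ne, ← pow_eq_zero_iff two_ne_zero, frob_sq_eq_trace,
    ← conjTranspose_eq_transpose_of_trivial, trace_conjTranspose_mul_self_eq_zero_iff]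

lemma frob_sq_sub_frob_sq (P Q : Matrix m n ℝ) :
    frob P ^ 2 - frob Q ^ 2 = trace ((P - Q)ᵀ * (P + Q)) := by
  rw [frob_sq_eq_trace, frob_sq_eq_trace, transpose_sub, Matrix.sub_mul, Matrix.mul_add,
    Matrix.mul_add, trace_sub, trace_add, trace_add, trace_transpose_mul_comm P Q]
  ring

section Stationary

variable {B : Matrix m m ℝ} {C : Matrix n n ℝ} {A X X₁ X₂ : Matrix m n ℝ} {lam lam₁ lam₂ : ℝ}

lemma mul_residual_mul_of_stationary (h : B * (B * X * C - A) * C + lam • X = 0) :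
    B * (A - B * X * C) * C = lam • X := by
  rw [← neg_sub, Matrix.mul_neg, Matrix.neg_mul]
  exact neg_eq_of_add_eq_zero_right h

theorem frob_residual_sq_sub_of_stationary (hB : B.IsSymm) (hC : C.IsSymm)
    (h₁ : B * (B * X₁ * C - A) * C + lam₁ • X₁ = 0)
    (h₂ : B * (B * X₂ * C - A) * C + lam₂ • X₂ = 0) (hnorm : frob X₁ = frob X₂) :
    frob (A - B * X₂ * C) ^ 2 - frob (A - B * X₁ * C) ^ 2
      = (lam₁ - lam₂) / 2 * frob (X₁ - X₂) ^ 2 := by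
  have hdiff : (A - B * X₂ * C) - (A - B * X₁ * C) = B * (X₁ - X₂) * C := by
    rw [Matrix.mul_sub, Matrix.sub_mul]
    abel
  have hsum : B * ((A - B * X₂ * C) + (A - B * X₁ * C)) * C = lam₂ • X₂ + lam₁ • X₁ := by
    rw [Matrix.mul_add, Matrix.add_mul, mul_residual_mul_of_stationary h₁,
      mul_residual_mul_of_stationary h₂]
  have hnorm_sq : trace (X₁ᵀ * X₁) = trace (X₂ᵀ * X₂) := by
    rw [← frob_sq_eq_trace, ← frob_sq_eq_trace, hnorm]
  calc frob (A - B * X₂ * C) ^ 2 - frob (A - B * X₁ * C) ^ 2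
      = trace ((X₁ - X₂)ᵀ * (lam₂ • X₂ + lam₁ • X₁)) := by
        rw [frob_sq_sub_frob_sq, hdiff, trace_transpose_mul_mul_mul, hB.eq, hC.eq, hsum]
    _ = (lam₁ - lam₂) / 2 * frob (X₁ - X₂) ^ 2 := by
        rw [frob_sq_eq_trace]
        simp only [transpose_sub, Matrix.sub_mul, Matrix.mul_add, Matrix.mul_sub,
          Matrix.mul_smul, trace_sub, trace_add, trace_smul, smul_eq_mul]
        linear_combination (lam₁ + lam₂) / 2 * (hnorm_sq + trace_transpose_mul_comm X₂ X₁)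

theorem frob_residual_lt_of_stationary (hB : B.IsSymm) (hC : C.IsSymm)
    (h₁ : B * (B * X₁ * C - A) * C + lam₁ • X₁ = 0)
    (h₂ : B * (B * X₂ * C - A) * C + lam₂ • X₂ = 0) (hnorm : frob X₁ = frob X₂)
    (hlam : lam₂ < lam₁) (hX : X₁ ≠ X₂) :
    frob (A - B * X₁ * C) < frob (A - B * X₂ * C) := by
  have hgap : 0 < (lam₁ - lam₂) / 2 * frob (X₁ - X₂) ^ 2 := by
    have := frob_pos_iff.2 (sub_ne_zero.2 hX)
    have := sub_pos.2 hlam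
    positivity
  refine (pow_lt_pow_iff_left₀ (frob_nonneg _) (frob_nonneg _) two_ne_zero).1 ?_
  linarith [frob_residual_sq_sub_of_stationary hB hC h₁ h₂ hnorm]

end Stationary

end Frobenius

theorem norm_constrained_stationary_comparison_general {s t : ℕ}
    (β : Fin s → ℝ) (γ : Fin t → ℝ)
    (A X₁ X₂ : Matrix (Fin s) (Fin t) ℝ) (lam₁ lam₂ : ℝ)
    (SB : Matrix (Fin s) (Fin s) ℝ) (SC : Matrix (Fin t) (Fin t) ℝ)
    (hSB : SB = Matrix.diagonal β) (hSC : SC = Matrix.diagonal γ)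
    (h₁ : SB * (SB * X₁ * SC - A) * SC + lam₁ • X₁ = 0)
    (h₂ : SB * (SB * X₂ * SC - A) * SC + lam₂ • X₂ = 0)
    (hnorm : frob X₁ = frob X₂) :
    frob (A - SB * X₂ * SC) ^ 2 - frob (A - SB * X₁ * SC) ^ 2
        = (lam₁ - lam₂) / 2 * frob (X₁ - X₂) ^ 2 ∧
      (lam₁ > lam₂ →
        frob (A - SB * X₁ * SC) < frob (A - SB * X₂ * SC) ∨ X₁ = X₂) := by
  have hB : SB.IsSymm := hSB ▸ isSymm_diagonal β
  have hC : SC.IsSymm := hSC ▸ isSymm_diagonal γ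
  refine ⟨frob_residual_sq_sub_of_stationary hB hC h₁ h₂ hnorm, fun hlam => ?_⟩
  exact or_iff_not_imp_right.2 (frob_residual_lt_of_stationary hB hC h₁ h₂ hnorm hlam)

theorem norm_constrained_stationary_comparison {s t : ℕ}
    (β : Fin s → ℝ) (γ : Fin t → ℝ) (hβ : ∀ i, 0 < β i) (hγ : ∀ j, 0 < γ j)
    (A X₁ X₂ : Matrix (Fin s) (Fin t) ℝ) (lam₁ lam₂ : ℝ)
    (SB : Matrix (Fin s) (Fin s) ℝ) (SC : Matrix (Fin t) (Fin t) ℝ)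
    (hSB : SB = Matrix.diagonal β) (hSC : SC = Matrix.diagonal γ)
    (h₁ : SB * (SB * X₁ * SC - A) * SC + lam₁ • X₁ = 0)
    (h₂ : SB * (SB * X₂ * SC - A) * SC + lam₂ • X₂ = 0)
    (hnorm : frob X₁ = frob X₂) :
    frob (A - SB * X₂ * SC) ^ 2 - frob (A - SB * X₁ * SC) ^ 2
        = (lam₁ - lam₂) / 2 * frob (X₁ - X₂) ^ 2 ∧
      (lam₁ > lam₂ →
        frob (A - SB * X₁ * SC) < frob (A - SB * X₂ * SC) ∨ X₁ = X₂) :=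
  norm_constrained_stationary_comparison_general β γ A X₁ X₂ lam₁ lam₂ SB SC hSB hSC h₁ h₂ hnorm
end
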